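/- The probability measure on [0,1] with density 1/(π√(x(1-x))) (the Beta(1/2,1/2) distribution) is invariant under the logistic map f(x) = 4x(1-x): for every Borel set A ⊆ [0,1], the measure of f⁻¹(A) equals the measure of A. -/

import Mathlib

/-- The logistic map with μ = 4. -/
noncomputable def logistic4 (x : ℝ) : ℝ := 4 * x * (1 - x)

/-- The Beta(1/2,1/2) (arcsine) measure on [0,1]: Lebesgue measure restricted to [0,1]
with density 1/(π √(x(1-x))). -/
noncomputable def arcsineMeasure : MeasureTheory.Measure ℝ :=
  (MeasureTheory.volume.restrict (Set.Icc (0:ℝ) 1)).withDensity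
    (fun x => ENNReal.ofReal (1 / (Real.pi * Real.sqrt (x * (1 - x)))))

/-!
On each monotone branch `[0, 1/2]` and `[1/2, 1]` the map `f x = 4x(1-x)` is a bijection onto
`[0, 1]`, and `f (1 - f) = x (1 - x) (f' / 2)²` turns the density `ρ` into
`ρ x = |f' x| ρ (f x) / 2`. By the change of variables formula each branch of `f⁻¹' A`
therefore carries half of the mass of `A`, and the two branches overlap only at `1/2`.
-/

open MeasureTheory Set ENNReal

noncomputable def arcsineDensity (x : ℝ) : ℝ≥0∞ :=
  ENNReal.ofReal (1 / (Real.pi * Real.sqrt (x * (1 - x))))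

lemma arcsineMeasure_apply_of_subset {S : Set ℝ} (hS : MeasurableSet S)
    (hS1 : S ⊆ Icc (0 : ℝ) 1) :
    arcsineMeasure S = ∫⁻ x in S, arcsineDensity x := by
  rw [arcsineMeasure, withDensity_apply _ hS, Measure.restrict_restrict hS,
    inter_eq_self_of_subset_left hS1]
  rfl

lemma arcsineMeasure_singleton (a : ℝ) : arcsineMeasure {a} = 0 :=
  withDensity_absolutelyContinuous _ _ (Measure.restrict_le_self.absolutelyContinuous (by simp))

lemma continuous_logistic4 : Continuous logistic4 := by
  unfold logistic4; fun_prop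

lemma hasDerivAt_logistic4 (x : ℝ) : HasDerivAt logistic4 (4 - 8 * x) x := by
  have h := ((hasDerivAt_id x).const_mul (4 : ℝ)).mul ((hasDerivAt_const x (1 : ℝ)).sub
    (hasDerivAt_id x))
  exact h.congr_deriv (by simp; ring)

lemma mapsTo_logistic4 : MapsTo logistic4 (Icc 0 1) (Icc 0 1) := by
  rintro x ⟨hx0, hx1⟩
  unfold logistic4
  constructor <;> nlinarith [sq_nonneg (1 - 2 * x)]

lemma logistic4_eq_logistic4_iff {x y : ℝ} :
    logistic4 x = logistic4 y ↔ x = y ∨ x + y = 1 := by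
  have : logistic4 x - logistic4 y = 4 * (x - y) * (1 - (x + y)) := by
    unfold logistic4; ring
  rw [← sub_eq_zero, this]
  simp only [mul_eq_zero, four_ne_zero, false_or, sub_eq_zero, eq_comm (a := (1 : ℝ))]

lemma injOn_logistic4_Icc_left : InjOn logistic4 (Icc 0 (1 / 2)) := by
  intro x hx y hy h
  rcases logistic4_eq_logistic4_iff.1 h with h | h
  · exact h
  · linarith [hx.2, hy.2]

lemma injOn_logistic4_Icc_right : InjOn logistic4 (Icc (1 / 2) 1) := by
  intro x hx y hy h
  rcases logistic4_eq_logistic4_iff.1 h with h | h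
  · exact h
  · linarith [hx.1, hy.1]

lemma logistic4_image_Icc_left : logistic4 '' Icc 0 (1 / 2) = Icc 0 1 := by
  refine subset_antisymm
    (mapsTo_logistic4.mono_left (Icc_subset_Icc_right (by norm_num))).image_subset ?_
  have h := intermediate_value_Icc (by norm_num : (0 : ℝ) ≤ 1 / 2)
    continuous_logistic4.continuousOn
  norm_num [logistic4] at h ⊢
  exact h

lemma logistic4_image_Icc_right : logistic4 '' Icc (1 / 2) 1 = Icc 0 1 := by
  refine subset_antisymm
    (mapsTo_logistic4.mono_left (Icc_subset_Icc_left (by norm_num))).image_subset ?_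
  have h := intermediate_value_Icc' (by norm_num : (1 / 2 : ℝ) ≤ 1)
    continuous_logistic4.continuousOn
  norm_num [logistic4] at h ⊢
  exact h

lemma arcsineDensity_eq_abs_deriv_mul {x : ℝ} (hx : x ≠ 1 / 2) :
    arcsineDensity x = ENNReal.ofReal |4 - 8 * x| * (arcsineDensity (logistic4 x) * 2⁻¹) := by
  have hd : 0 < |4 - 8 * x| := abs_pos.2 fun h => hx (by linarith)
  have hsqrt : Real.sqrt (logistic4 x * (1 - logistic4 x))
      = Real.sqrt (x * (1 - x)) * (|4 - 8 * x| / 2) := by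
    rw [show logistic4 x * (1 - logistic4 x) = x * (1 - x) * ((4 - 8 * x) / 2) ^ 2 by
        unfold logistic4; ring,
      Real.sqrt_mul' _ (sq_nonneg _), Real.sqrt_sq_eq_abs, abs_div, abs_two]
  have hreal : 1 / (Real.pi * Real.sqrt (x * (1 - x))) = |4 - 8 * x| *
      (1 / (Real.pi * Real.sqrt (logistic4 x * (1 - logistic4 x))) * 2⁻¹) := by
    rw [hsqrt]
    generalize |4 - 8 * x| = d at hd ⊢
    field_simp
  rw [arcsineDensity, arcsineDensity, hreal, ENNReal.ofReal_mul (abs_nonneg _),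
    ENNReal.ofReal_mul (by positivity), ENNReal.ofReal_inv_of_pos two_pos, ENNReal.ofReal_ofNat]

lemma setLIntegral_arcsineDensity_eq_half_image {s : Set ℝ} (hs : MeasurableSet s)
    (hinj : InjOn logistic4 s) :
    ∫⁻ x in s, arcsineDensity x = (∫⁻ y in logistic4 '' s, arcsineDensity y) / 2 := by
  rw [ENNReal.div_eq_inv_mul, ← lintegral_const_mul' _ _ (by simp),
    lintegral_image_eq_lintegral_abs_deriv_mul hs
      (fun x _ => (hasDerivAt_logistic4 x).hasDerivWithinAt) hinj]
  refine setLIntegral_congr_fun_ae hs ?_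
  filter_upwards [Measure.ae_ne volume (1 / 2 : ℝ)] with x hx _
  rw [arcsineDensity_eq_abs_deriv_mul hx, mul_comm (arcsineDensity _)]

lemma arcsineMeasure_preimage_inter_eq_half {I A : Set ℝ} (hI : MeasurableSet I)
    (hI1 : I ⊆ Icc 0 1) (hinj : InjOn logistic4 I) (himage : logistic4 '' I = Icc 0 1)
    (hA : MeasurableSet A) (hA1 : A ⊆ Icc 0 1) :
    arcsineMeasure (logistic4 ⁻¹' A ∩ I) = arcsineMeasure A / 2 := by
  have hP : MeasurableSet (logistic4 ⁻¹' A ∩ I) :=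
    (continuous_logistic4.measurable hA).inter hI
  rw [arcsineMeasure_apply_of_subset hP (inter_subset_right.trans hI1),
    arcsineMeasure_apply_of_subset hA hA1,
    setLIntegral_arcsineDensity_eq_half_image hP (hinj.mono inter_subset_right),
    image_preimage_inter, himage, inter_eq_self_of_subset_left hA1]

theorem logistic_arcsine_invariant (A : Set ℝ) (hA : MeasurableSet A)
    (hA1 : A ⊆ Set.Icc (0:ℝ) 1) :
    arcsineMeasure (logistic4 ⁻¹' A ∩ Set.Icc (0:ℝ) 1) = arcsineMeasure A := by
  have hsplit : logistic4 ⁻¹' A ∩ Icc 0 1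
      = (logistic4 ⁻¹' A ∩ Icc 0 (1 / 2)) ∪ (logistic4 ⁻¹' A ∩ Icc (1 / 2) 1) := by
    rw [← inter_union_distrib_left, Icc_union_Icc_eq_Icc (by norm_num) (by norm_num)]
  have hoverlap : AEDisjoint arcsineMeasure (logistic4 ⁻¹' A ∩ Icc 0 (1 / 2))
      (logistic4 ⁻¹' A ∩ Icc (1 / 2) 1) :=
    measure_mono_null (fun x ⟨⟨_, hx⟩, ⟨_, hx'⟩⟩ => le_antisymm hx.2 hx'.1)
      (arcsineMeasure_singleton _)
  have hright : NullMeasurableSet (logistic4 ⁻¹' A ∩ Icc (1 / 2) 1) arcsineMeasure :=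
    ((continuous_logistic4.measurable hA).inter measurableSet_Icc).nullMeasurableSet
  rw [hsplit, measure_union₀ hright hoverlap,
    arcsineMeasure_preimage_inter_eq_half measurableSet_Icc (Icc_subset_Icc_right (by norm_num))
      injOn_logistic4_Icc_left logistic4_image_Icc_left hA hA1,
    arcsineMeasure_preimage_inter_eq_half measurableSet_Icc (Icc_subset_Icc_left (by norm_num))
      injOn_logistic4_Icc_right logistic4_image_Icc_right hA hA1,
    ENNReal.add_halves]
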